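/- Let γ ∈ ℝ and fₙ(x,y) := φₙ(y) for n ≥ 1. Then fₙ is a normalized eigenfunction of T = γT₁ + T₂ with eigenvalue γ + (2/3)ⁿ, that is, T fₙ = (γ + (2/3)ⁿ) fₙ in L²([0,1]², Lebesgue). -/

import Mathlib

open MeasureTheory Filter Topology Metric

noncomputable section

namespace EfimovExample

/-- `pₙ = 1 - 2⁻ⁿ` (so `p₀ = 0`, `p₁ = 1/2`, ...). -/
def p (n : ℕ) : ℝ := 1 - (1 / 2 : ℝ) ^ n

/-- `qₙ = (p_{n-1} + pₙ)/2`, the midpoint of `[p_{n-1}, pₙ]`. -/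
def q (n : ℕ) : ℝ := (p (n - 1) + p n) / 2

/-- `ξₙ(y) = π (y - p_{n-1})/(pₙ - p_{n-1})` on `[p_{n-1}, pₙ]` and `0` elsewhere. -/
def ξ (n : ℕ) (y : ℝ) : ℝ :=
  if y ∈ Set.Icc (p (n - 1)) (p n) then
    Real.pi * (y - p (n - 1)) / (p n - p (n - 1))
  else 0

/-- `φₙ(y) = 2^{(n+1)/2} sin (ξₙ(y))`. -/
def φ (n : ℕ) (y : ℝ) : ℝ := 2 ^ ((n + 1 : ℝ) / 2) * Real.sin (ξ n y)

/-- The kernel `k₂(y,t) = Σ_{n ≥ 1} (2/3)ⁿ φₙ(y) φₙ(t)`. -/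
def k₂ (y t : ℝ) : ℝ := ∑' n : ℕ, (2 / 3 : ℝ) ^ (n + 1) * φ (n + 1) y * φ (n + 1) t

/-- The tent function `rₙ`, supported on `[p_{n-1}, pₙ]` with peak `1` at `qₙ`. -/
def r (n : ℕ) (x : ℝ) : ℝ :=
  if x ∈ Set.Icc (p (n - 1)) (q n) then (x - p (n - 1)) / (q n - p (n - 1))
  else if x ∈ Set.Icc (q n) (p n) then (p n - x) / (p n - q n)
  else 0

/-- `u(x) = 0` on `[0, 1/2]`, and `u(x) = Σ_{n ≥ 1} δₙ rₙ(x)` for `x > 1/2`. -/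
def u (δ : ℕ → ℝ) (x : ℝ) : ℝ :=
  if x ≤ 1 / 2 then 0 else ∑' n : ℕ, δ (n + 1) * r (n + 1) x

/-- Lebesgue measure on `[0,1]`. -/
def μI : Measure ℝ := volume.restrict (Set.Icc 0 1)

/-- Lebesgue measure on `[0,1]²`. -/
def μI2 : Measure (ℝ × ℝ) := μI.prod μI

/-! The supports `[p_{n-1}, p_n]` of the `φₙ` overlap only at endpoints, where the later
function vanishes, so `φₘ φₙ = 0` for `m ≠ n` and `∫ k₂(y,t) φₙ(t) dt` collapses to
`(2/3)ⁿ φₙ(y) ∫ φₙ² = (2/3)ⁿ φₙ(y)`. A function of `y` alone is fixed by `T₁`, which averages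
over the probability space `[0,1]` in `x`, and its norm in `L²([0,1]²)` is that of `φₙ` in
`L²([0,1])`, namely `1`. -/

end EfimovExample

namespace MeasureTheory

variable {α β E : Type*} [MeasurableSpace α] [MeasurableSpace β] {μ : Measure α} {ν : Measure β}

theorem eLpNorm_comp_snd [NormedAddCommGroup E] [IsProbabilityMeasure μ] [SFinite ν]
    {g : β → E} (hg : AEStronglyMeasurable g ν) (p : ENNReal) :
    eLpNorm (fun z : α × β => g z.2) p (μ.prod ν) = eLpNorm g p ν := by
  have hmap : (μ.prod ν).map Prod.snd = ν := Measure.snd_prod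
  rw [← hmap] at hg
  have h := eLpNorm_map_measure (p := p) hg measurable_snd.aemeasurable
  rw [hmap] at h
  exact h.symm

variable [SFinite ν] {f : α × β → E} {g : β → E}

theorem ae_ae_eq_of_ae_eq_comp_snd (hf : f =ᵐ[μ.prod ν] fun z => g z.2) :
    ∀ᵐ z ∂μ.prod ν, (fun t => f (z.1, t)) =ᵐ[ν] g :=
  (Measure.quasiMeasurePreserving_fst (μ := μ) (ν := ν)).tendsto_ae.eventually
    (Measure.ae_ae_of_ae_prod hf)

theorem ae_ae_eq_const_of_ae_eq_comp_snd [SFinite μ] (hf : f =ᵐ[μ.prod ν] fun z => g z.2) :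
    ∀ᵐ z ∂μ.prod ν, (fun s => f (s, z.2)) =ᵐ[μ] fun _ => g z.2 := by
  have hswap : (fun z : β × α => f z.swap) =ᵐ[ν.prod μ] fun z => g z.1 :=
    (Measure.measurePreserving_swap.quasiMeasurePreserving).tendsto_ae.eventually hf
  exact (Measure.quasiMeasurePreserving_snd (μ := μ) (ν := ν)).tendsto_ae.eventually
    (Measure.ae_ae_of_ae_prod hswap)

end MeasureTheory

namespace EfimovExample

open Real

theorem p_strictMono : StrictMono p := fun m n h => by
  have := pow_lt_pow_right_of_lt_one₀ (a := (1 / 2 : ℝ)) (by norm_num) (by norm_num) h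
  simp only [p]
  linarith

theorem p_nonneg (n : ℕ) : 0 ≤ p n := by
  have : (1 / 2 : ℝ) ^ n ≤ 1 := pow_le_one₀ (by norm_num) (by norm_num)
  simp only [p]
  linarith

theorem p_le_one (n : ℕ) : p n ≤ 1 := by
  simp only [p]
  linarith [pow_nonneg (by norm_num : (0 : ℝ) ≤ 1 / 2) n]

theorem p_sub_p_pred {n : ℕ} (hn : 1 ≤ n) : p n - p (n - 1) = (1 / 2) ^ n := by
  obtain ⟨k, rfl⟩ : ∃ k, n = k + 1 := ⟨n - 1, by omega⟩
  simp only [p, Nat.add_sub_cancel, pow_succ]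
  ring

theorem φ_eq_zero_of_notMem {n : ℕ} {t : ℝ} (h : t ∉ Set.Icc (p (n - 1)) (p n)) : φ n t = 0 := by
  simp [φ, ξ, h]

theorem φ_p_pred (n : ℕ) : φ n (p (n - 1)) = 0 := by
  have hmem : p (n - 1) ∈ Set.Icc (p (n - 1)) (p n) :=
    ⟨le_rfl, p_strictMono.monotone (Nat.sub_le n 1)⟩
  simp [φ, ξ, hmem]

theorem φ_eq_on_Icc {n : ℕ} {t : ℝ} (ht : t ∈ Set.Icc (p (n - 1)) (p n)) :
    φ n t = 2 ^ ((n + 1 : ℝ) / 2) * sin (π * (t - p (n - 1)) / (p n - p (n - 1))) := by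
  simp [φ, ξ, ht]

theorem φ_mul_φ_of_lt {m n : ℕ} (h : m < n) (t : ℝ) : φ m t * φ n t = 0 := by
  by_cases hm : t ∈ Set.Icc (p (m - 1)) (p m)
  · by_cases hn : t ∈ Set.Icc (p (n - 1)) (p n)
    · have ht : t = p (n - 1) :=
        le_antisymm (hm.2.trans (p_strictMono.monotone (by omega))) hn.1
      rw [ht, φ_p_pred, mul_zero]
    · rw [φ_eq_zero_of_notMem hn, mul_zero]
  · rw [φ_eq_zero_of_notMem hm, zero_mul]

theorem φ_mul_φ_of_ne {m n : ℕ} (hmn : m ≠ n) (t : ℝ) : φ m t * φ n t = 0 := by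
  rcases hmn.lt_or_gt with h | h
  · exact φ_mul_φ_of_lt h t
  · rw [mul_comm]
    exact φ_mul_φ_of_lt h t

theorem measurable_φ (n : ℕ) : Measurable (φ n) :=
  ((Measurable.ite measurableSet_Icc (by fun_prop) measurable_const).sin).const_mul _

theorem abs_φ_le (n : ℕ) (y : ℝ) : |φ n y| ≤ 2 ^ ((n + 1 : ℝ) / 2) := by
  rw [φ, abs_mul, abs_of_pos (by positivity)]
  exact mul_le_of_le_one_right (by positivity) (abs_sin_le_one _)

instance : IsProbabilityMeasure μI :=
  ⟨by simp [μI, Real.volume_Icc]⟩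

theorem memLp_φ (n : ℕ) : MemLp (fun y => (φ n y : ℂ)) 2 μI :=
  MemLp.of_bound (Complex.measurable_ofReal.comp (measurable_φ n)).aestronglyMeasurable _
    (ae_of_all _ fun y => by simpa only [Complex.norm_real, Real.norm_eq_abs] using abs_φ_le n y)

theorem integral_sin_sq_pi_mul_sub_div {a b : ℝ} (hab : a < b) :
    ∫ t in a..b, sin (π * (t - a) / (b - a)) ^ 2 = (b - a) / 2 := by
  have hc : π / (b - a) ≠ 0 := (div_pos pi_pos (sub_pos.2 hab)).ne'
  have hπ : π / (b - a) * (b - a) = π := div_mul_cancel₀ _ (sub_pos.2 hab).ne'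
  simp_rw [mul_div_right_comm π]
  rw [intervalIntegral.integral_comp_sub_right (fun u => sin (π / (b - a) * u) ^ 2),
    intervalIntegral.integral_comp_mul_left (fun u => sin u ^ 2) hc, sub_self, mul_zero, hπ,
    integral_sin_sq]
  simp only [sin_zero, sin_pi, zero_mul, sub_zero, smul_eq_mul]
  field_simp
  ring

theorem integral_φ_sq {n : ℕ} (hn : 1 ≤ n) : ∫ t, φ n t ^ 2 ∂μI = 1 := by
  set a := p (n - 1)
  set b := p n
  have hba : b - a = (1 / 2) ^ n := p_sub_p_pred hn
  have hab : a < b := by rw [← sub_pos, hba]; positivity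
  have hsq : ((2 : ℝ) ^ ((n + 1 : ℝ) / 2)) ^ 2 = 2 ^ (n + 1) := by
    rw [← rpow_mul_natCast zero_le_two, ← rpow_natCast]
    push_cast
    ring_nf
  have hvanish : ∀ s : Set ℝ, Set.Icc a b ⊆ s → ∀ t ∉ s, φ n t ^ 2 = 0 := fun s hs t ht => by
    rw [φ_eq_zero_of_notMem fun h => ht (hs h), zero_pow two_ne_zero]
  calc ∫ t, φ n t ^ 2 ∂μI
      = ∫ t in a..b, φ n t ^ 2 := by
        rw [μI, setIntegral_eq_integral_of_forall_compl_eq_zero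
            (hvanish _ (Set.Icc_subset_Icc (p_nonneg _) (p_le_one _))),
          ← setIntegral_eq_integral_of_forall_compl_eq_zero (hvanish _ subset_rfl),
          intervalIntegral.integral_of_le hab.le, integral_Icc_eq_integral_Ioc]
    _ = ∫ t in a..b, 2 ^ (n + 1) * sin (π * (t - a) / (b - a)) ^ 2 := by
        refine intervalIntegral.integral_congr fun t ht => ?_
        rw [Set.uIcc_of_le hab.le] at ht
        rw [φ_eq_on_Icc ht, mul_pow, hsq]
    _ = 1 := by
        rw [intervalIntegral.integral_const_mul, integral_sin_sq_pi_mul_sub_div hab, hba, one_div,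
          inv_pow]
        field_simp
        ring

theorem eLpNorm_φ {n : ℕ} (hn : 1 ≤ n) : eLpNorm (fun y => (φ n y : ℂ)) 2 μI = 1 := by
  rw [(memLp_φ n).eLpNorm_eq_integral_rpow_norm two_ne_zero ENNReal.ofNat_ne_top]
  simp only [Complex.norm_real, Real.norm_eq_abs, ENNReal.toReal_ofNat, rpow_two, sq_abs,
    integral_φ_sq hn]
  simp

theorem k₂_mul_φ {n : ℕ} (hn : 1 ≤ n) (y t : ℝ) :
    k₂ y t * φ n t = (2 / 3) ^ n * φ n y * φ n t ^ 2 := by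
  obtain ⟨m, rfl⟩ : ∃ m, n = m + 1 := ⟨n - 1, by omega⟩
  rw [k₂, ← tsum_mul_right, tsum_eq_single m]
  · ring
  · intro k hk
    rw [mul_assoc, φ_mul_φ_of_ne (by omega) t, mul_zero]

theorem integral_k₂_mul_φ {n : ℕ} (hn : 1 ≤ n) (y : ℝ) :
    ∫ t, (k₂ y t : ℂ) * φ n t ∂μI = ((2 / 3 : ℝ) ^ n * φ n y : ℝ) := by
  simp_rw [← Complex.ofReal_mul, integral_complex_ofReal, k₂_mul_φ hn, integral_const_mul,
    integral_φ_sq hn, mul_one]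

/-- For every `γ ∈ ℝ` and `n ≥ 1`, the function `fₙ(x,y) = φₙ(y)` is a normalized
eigenfunction of `T = γT₁ + T₂` with eigenvalue `γ + (2/3)ⁿ`. -/
theorem eigenfunctions_of_T
    (T₁ T₂ : Lp ℂ 2 μI2 →L[ℂ] Lp ℂ 2 μI2)
    (hT₁ : ∀ f : Lp ℂ 2 μI2,
      (T₁ f : ℝ × ℝ → ℂ) =ᵐ[μI2] fun xy => ∫ s, f (s, xy.2) ∂μI)
    (hT₂ : ∀ f : Lp ℂ 2 μI2,
      (T₂ f : ℝ × ℝ → ℂ) =ᵐ[μI2] fun xy => ∫ t, (k₂ xy.2 t : ℂ) * f (xy.1, t) ∂μI)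
    (γ : ℝ) :
    ∀ n : ℕ, 1 ≤ n →
      MemLp (fun xy : ℝ × ℝ => (φ n xy.2 : ℂ)) 2 μI2 ∧
      ∀ f : Lp ℂ 2 μI2, (f : ℝ × ℝ → ℂ) =ᵐ[μI2] (fun xy => (φ n xy.2 : ℂ)) →
        ‖f‖ = 1 ∧
        ((γ : ℂ) • T₁ + T₂) f = ((γ + (2 / 3 : ℝ) ^ n : ℝ) : ℂ) • f := by
  intro n hn
  refine ⟨(memLp_φ n).comp_snd μI, fun f hf => ⟨?_, ?_⟩⟩
  · rw [Lp.norm_def, eLpNorm_congr_ae hf, μI2, eLpNorm_comp_snd (memLp_φ n).1, eLpNorm_φ hn,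
      ENNReal.toReal_one]
  have hT₁f : (T₁ f : ℝ × ℝ → ℂ) =ᵐ[μI2] fun xy => (φ n xy.2 : ℂ) := by
    filter_upwards [hT₁ f, ae_ae_eq_const_of_ae_eq_comp_snd (g := fun y => (φ n y : ℂ)) hf]
      with xy hT hf'
    rw [hT, integral_congr_ae hf', integral_const, probReal_univ, one_smul]
  have hT₂f : (T₂ f : ℝ × ℝ → ℂ) =ᵐ[μI2] fun xy => (((2 / 3 : ℝ) ^ n * φ n xy.2 : ℝ) : ℂ) := by
    filter_upwards [hT₂ f, ae_ae_eq_of_ae_eq_comp_snd (g := fun y => (φ n y : ℂ)) hf]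
      with xy hT hf'
    rw [hT, ← integral_k₂_mul_φ hn]
    refine integral_congr_ae ?_
    filter_upwards [hf'] with t ht
    rw [ht]
  refine Lp.ext ?_
  filter_upwards [Lp.coeFn_add ((γ : ℂ) • T₁ f) (T₂ f), Lp.coeFn_smul (γ : ℂ) (T₁ f),
    Lp.coeFn_smul ((γ + (2 / 3 : ℝ) ^ n : ℝ) : ℂ) f, hT₁f, hT₂f, hf]
    with xy hadd hsmulT hsmulf hT₁xy hT₂xy hfxy
  change ((γ : ℂ) • T₁ f + T₂ f : Lp ℂ 2 μI2) xy = _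
  simp only [hadd, hsmulT, hsmulf, Pi.add_apply, Pi.smul_apply, smul_eq_mul, hT₁xy, hT₂xy, hfxy]
  push_cast
  ring

end EfimovExample

end
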